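/- arXiv:1510.06840 — 4 statements merged into one kernel-verified Lean document; each statement's English description precedes it below -/
import Mathlib

section
/- For every integer n and every natural number k, the quantum factorial [k]! divides the product [n]·[n−1]⋯[n−k+1] in the polynomial ring ℤ[δ]. (Consequently the quantum binomial coefficient (n choose k) is a well-defined element of ℤ[δ] for every n ∈ ℤ and k ∈ ℕ.) -/
/-!
Both sides of `[a + b] = [a][b + 1] - [a - 1][b]` and `[a - b] = [a][b + 1] - [a + 1][b]` solve the
defining recursion in `b` with the same values at `b = 0, 1`, so these addition formulas hold.
With `[n + 1] = [k + 1][n - k + 1] - [k][n - k]` and `[n - k - 1] = [k + 2][n] - [k + 1][n + 1]`,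
the descending product of length `k + 1` starting at `n ± 1` is a combination of the one starting
at `n` and of `[k + 1]` times a descending product of length `k`. Induction on `k`, and inside it
on `n` in both directions from `n = 0` (where the product contains `[0] = 0`), gives the claim
over any commutative ring.
-/

open Finset

namespace QuantumInteger

variable {R : Type*} [CommRing R] {δ : R}

theorem funext_of_recurrence {x y : ℤ → R} (hx : ∀ m, x m * δ = x (m + 1) + x (m - 1))
    (hy : ∀ m, y m * δ = y (m + 1) + y (m - 1)) (h0 : x 0 = y 0) (h1 : x 1 = y 1) : x = y := by
  suffices h : ∀ m, x m = y m ∧ x (m + 1) = y (m + 1) from funext fun m => (h m).1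
  intro m
  induction m using Int.induction_on with
  | zero => exact ⟨h0, by simpa using h1⟩
  | succ m ih =>
    refine ⟨ih.2, ?_⟩
    have hx' := hx (m + 1)
    have hy' := hy (m + 1)
    rw [add_sub_cancel_right] at hx' hy'
    linear_combination hy' - hx' + δ * ih.2 - ih.1
  | pred m ih =>
    refine ⟨?_, by simpa using ih.1⟩
    linear_combination hy (-m) - hx (-m) + δ * ih.1 - ih.2

variable {f : ℤ → R} (hrec : ∀ m, f m * δ = f (m + 1) + f (m - 1)) (h0 : f 0 = 0) (h1 : f 1 = 1)
include hrec h0 h1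

theorem apply_two : f 2 = δ := by
  simpa [h0, h1] using (hrec 1).symm

theorem apply_add (a b : ℤ) : f (a + b) = f a * f (b + 1) - f (a - 1) * f b := by
  refine congrFun (funext_of_recurrence (δ := δ) (x := fun b => f (a + b))
    (y := fun b => f a * f (b + 1) - f (a - 1) * f b) (fun m => ?_) (fun m => ?_) ?_ ?_) b
  · simpa only [add_assoc, add_sub_assoc] using hrec (a + m)
  · have h := hrec (m + 1)
    simp only [add_sub_cancel_right, sub_add_cancel] at h ⊢
    linear_combination f a * h - f (a - 1) * hrec m
  · simp [h0, h1]
  · simp only [one_add_one_eq_two, apply_two hrec h0 h1, h1]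
    linear_combination -hrec a

theorem apply_sub (a b : ℤ) : f (a - b) = f a * f (b + 1) - f (a + 1) * f b := by
  refine congrFun (funext_of_recurrence (δ := δ) (x := fun b => f (a - b))
    (y := fun b => f a * f (b + 1) - f (a + 1) * f b) (fun m => ?_) (fun m => ?_) ?_ ?_) b
  · rw [sub_sub_eq_add_sub, add_comm, add_sub_right_comm, ← sub_sub]
    exact hrec (a - m)
  · have h := hrec (m + 1)
    simp only [add_sub_cancel_right, sub_add_cancel] at h ⊢
    linear_combination f a * h - f (a + 1) * hrec m
  · simp [h0, h1]
  · simp only [one_add_one_eq_two, apply_two hrec h0 h1, h1]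
    linear_combination -hrec a

theorem prod_range_add_one_dvd_prod_range_sub (k : ℕ) (n : ℤ) :
    (∏ i ∈ range k, f (i + 1)) ∣ ∏ i ∈ range k, f (n - i) := by
  induction k generalizing n with
  | zero => simp
  | succ k ihk =>
    have head (m : ℤ) :
        ∏ i ∈ range (k + 1), f (m - i) = f m * ∏ i ∈ range k, f (m - 1 - i) := by
      rw [prod_range_succ', mul_comm]
      simp [sub_sub, add_comm]
    have tail (m : ℤ) :
        ∏ i ∈ range (k + 1), f (m - i) = (∏ i ∈ range k, f (m - i)) * f (m - k) :=
      prod_range_succ _ _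
    have up (m : ℤ) : ∏ i ∈ range (k + 1), f (m + 1 - i) =
        (∏ i ∈ range k, f (m - i)) * f (k + 1) * f (m - k + 1)
          - f k * ∏ i ∈ range (k + 1), f (m - i) := by
      have h := apply_add hrec h0 h1 (k + 1) (m - k)
      rw [show (k : ℤ) + 1 + (m - k) = m + 1 by ring, add_sub_cancel_right] at h
      rw [head, add_sub_cancel_right, h, tail]
      ring
    have down (m : ℤ) : ∏ i ∈ range (k + 1), f (m - 1 - i) =
        f (k + 2) * ∏ i ∈ range (k + 1), f (m - i)
          - f (m + 1) * ((∏ i ∈ range k, f (m - 1 - i)) * f (k + 1)) := by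
      have h := apply_sub hrec h0 h1 m (k + 1)
      rw [show m - (k + 1) = m - 1 - k by ring, add_assoc, one_add_one_eq_two] at h
      rw [tail, h, head]
      ring
    rw [prod_range_succ]
    induction n using Int.induction_on with
    | zero =>
      rw [head, h0, zero_mul]
      exact dvd_zero _
    | succ n ih =>
      rw [up]
      exact dvd_sub ((mul_dvd_mul (ihk n) dvd_rfl).mul_right _) (ih.mul_left _)
    | pred n ih =>
      rw [down]
      exact dvd_sub (ih.mul_left _) ((mul_dvd_mul (ihk _) dvd_rfl).mul_left _)

end QuantumInteger

theorem qfact_dvd_descending_product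
    (f : ℤ → Polynomial ℤ) (h0 : f 0 = 0) (h1 : f 1 = 1)
    (hrec : ∀ m : ℤ, f m * Polynomial.X = f (m + 1) + f (m - 1))
    (n : ℤ) (k : ℕ) :
    (∏ i ∈ Finset.range k, f ((i : ℤ) + 1)) ∣ ∏ i ∈ Finset.range k, f (n - (i : ℤ)) :=
  QuantumInteger.prod_range_add_one_dvd_prod_range_sub hrec h0 h1 k n
end

section
/- For all natural numbers 0 ≤ k ≤ m there exists a polynomial p ∈ ℤ[X] such that, in the Laurent polynomial ring ℤ[q,q⁻¹], p(q + q⁻¹) · [k]_q! = [m]_q·[m−1]_q⋯[m−k+1]_q. In other words, the balanced quantum binomial coefficient (m choose k)_q exists in ℤ[q,q⁻¹] and is a polynomial with integer coefficients in δ = q + q⁻¹. -/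
/-- The balanced quantum integer `[m]_q = q^{m-1} + q^{m-3} + ⋯ + q^{1-m}` in `ℤ[q,q⁻¹]`,
with `[0]_q = 0`. -/
noncomputable def qnumL (m : ℕ) : LaurentPolynomial ℤ :=
  ∑ i ∈ Finset.range m, LaurentPolynomial.T ((m : ℤ) - 1 - 2 * (i : ℤ))

/-- The balanced quantum factorial `[k]_q! = [k]_q · [k-1]_q ⋯ [1]_q`, with `[0]_q! = 1`. -/
noncomputable def qfactL (k : ℕ) : LaurentPolynomial ℤ :=
  ∏ i ∈ Finset.range k, qnumL (i + 1)

/-!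
Write `[m]_k = [m]_q [m-1]_q ⋯ [m-k+1]_q`. The q-Pascal rule
`[m+1]_q = q^{m-k} [k+1]_q + q^{-(k+1)} [m-k]_q` turns `[m+1]_{k+1} = [m+1]_q [m]_k` into
`q^{m-k} [m]_k [k+1]_q + q^{-(k+1)} [m]_{k+1}`, so by induction on `m` the factorial `[k]_q!`
divides `[m]_k` in `ℤ[q,q⁻¹]`. Both are invariant under `q ↦ q⁻¹` and `ℤ[q,q⁻¹]` is a domain, so
the quotient is invariant too. An invariant Laurent polynomial `f` equals `g + g(q⁻¹) - f₀`, where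
`g` is its part of non-negative degree and `f₀` its constant term, and `g + g(q⁻¹)` is a
combination of the `q^n + q^{-n}`, which are Dickson polynomials evaluated at `δ = q + q⁻¹`.
-/

open scoped LaurentPolynomial Polynomial

namespace LaurentPolynomial

variable {R : Type*} [CommRing R]

theorem aeval_dickson_T_add_T_neg (n : ℕ) :
    Polynomial.aeval (T 1 + T (-1) : R[T;T⁻¹]) (Polynomial.dickson 1 (1 : R) n)
      = T n + T (-n) := by
  rw [← Polynomial.eval_map_algebraMap (R := R), Polynomial.map_dickson, map_one,
    Polynomial.dickson_one_one_eval_add_inv _ _ (by rw [← T_add]; simp), T_pow, T_pow]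
  simp

theorem add_invert_mem_range_aeval (g : R[T;T⁻¹]) :
    g + invert g ∈ (Polynomial.aeval (R := R) (T 1 + T (-1) : R[T;T⁻¹])).range := by
  induction g using LaurentPolynomial.induction_on' with
  | add p q hp hq =>
    rw [map_add, add_add_add_comm]
    exact add_mem hp hq
  | C_mul_T n a =>
    have hT : T n + T (-n) ∈ (Polynomial.aeval (R := R) (T 1 + T (-1) : R[T;T⁻¹])).range := by
      obtain ⟨k, rfl | rfl⟩ := Int.eq_nat_or_neg n
      · exact (AlgHom.mem_range _).mpr ⟨_, aeval_dickson_T_add_T_neg k⟩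
      · rw [neg_neg, add_comm (T (-(k : ℤ)))]
        exact (AlgHom.mem_range _).mpr ⟨_, aeval_dickson_T_add_T_neg k⟩
    rw [map_mul, invert_C, invert_T, ← mul_add, C_eq_algebraMap, ← Algebra.smul_def]
    exact Subalgebra.smul_mem _ hT a

theorem add_C_coeff_zero_eq_trunc_add_invert (f : R[T;T⁻¹]) :
    f + C (f.coeff 0)
      = Polynomial.toLaurent (trunc f) + invert (Polynomial.toLaurent (trunc (invert f))) := by
  induction f using LaurentPolynomial.induction_on' with
  | add p q hp hq =>
    simp only [AddMonoidAlgebra.coeff_add, Finsupp.add_apply, map_add]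
    rw [← add_add_add_comm, hp, hq]
    abel
  | C_mul_T n a =>
    rw [map_mul invert, invert_C, invert_T, trunc_C_mul_T, trunc_C_mul_T,
      ← single_eq_C_mul_T, AddMonoidAlgebra.coeff_single, Finsupp.single_apply, single_eq_C_mul_T]
    rcases lt_trichotomy n 0 with h | rfl | h
    · simp [h.not_ge, h.ne, h.le]
    · simp
    · simp [h.not_ge, h.ne', h.le]

theorem exists_aeval_eq_of_invert_eq {f : R[T;T⁻¹]} (hf : invert f = f) :
    ∃ p : R[X], Polynomial.aeval (T 1 + T (-1) : R[T;T⁻¹]) p = f := by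
  have hsplit := add_C_coeff_zero_eq_trunc_add_invert f
  rw [hf] at hsplit
  rw [← AlgHom.mem_range, eq_sub_of_add_eq hsplit, C_eq_algebraMap]
  exact sub_mem (add_invert_mem_range_aeval _) (Subalgebra.algebraMap_mem _ _)

end LaurentPolynomial

open LaurentPolynomial

theorem invert_qnumL (m : ℕ) : invert (qnumL m) = qnumL m := by
  rw [qnumL, map_sum, ← Finset.sum_range_reflect]
  refine Finset.sum_congr rfl fun i hi => ?_
  have him := Finset.mem_range.mp hi
  rw [invert_T]
  congr 1
  omega

theorem invert_qfactL (k : ℕ) : invert (qfactL k) = qfactL k := by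
  simp only [qfactL, map_prod, invert_qnumL]

theorem eval₂_one_qnumL (m : ℕ) : eval₂ (RingHom.id ℤ) 1 (qnumL m) = m := by
  simp [qnumL, eval₂_T]

theorem qnumL_ne_zero {m : ℕ} (hm : m ≠ 0) : qnumL m ≠ 0 := by
  intro h
  have h0 := eval₂_one_qnumL m
  rw [h, map_zero] at h0
  exact hm (by exact_mod_cast h0.symm)

theorem qfactL_ne_zero (k : ℕ) : qfactL k ≠ 0 :=
  Finset.prod_ne_zero_iff.mpr fun i _ => qnumL_ne_zero i.succ_ne_zero

theorem qnumL_add (a b : ℕ) :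
    qnumL (a + b) = T b * qnumL a + T (-a) * qnumL b := by
  rw [qnumL, Finset.sum_range_add, qnumL, qnumL, Finset.mul_sum, Finset.mul_sum]
  congr 1 <;> refine Finset.sum_congr rfl fun i _ => ?_ <;> rw [← T_add] <;> push_cast <;> ring_nf

theorem qnumL_succ_eq_of_le {k m : ℕ} (h : k ≤ m) :
    qnumL (m + 1) = T (m - k : ℕ) * qnumL (k + 1) + T (-(k + 1 : ℕ)) * qnumL (m - k) := by
  rw [← qnumL_add]
  congr 1
  omega

theorem qfactL_succ (k : ℕ) : qfactL (k + 1) = qfactL k * qnumL (k + 1) :=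
  Finset.prod_range_succ _ _

theorem prod_qnumL_sub_eq_zero {m k : ℕ} (h : m < k) :
    ∏ i ∈ Finset.range k, qnumL (m - i) = 0 :=
  Finset.prod_eq_zero (Finset.mem_range.mpr h) (by simp [qnumL])

theorem prod_range_succ_qnumL_succ_sub (m k : ℕ) :
    ∏ i ∈ Finset.range (k + 1), qnumL (m + 1 - i)
      = qnumL (m + 1) * ∏ i ∈ Finset.range k, qnumL (m - i) := by
  rw [Finset.prod_range_succ', mul_comm]
  simp

theorem qfactL_dvd_prod_qnumL_sub (m k : ℕ) :
    qfactL k ∣ ∏ i ∈ Finset.range k, qnumL (m - i) := by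
  induction m generalizing k with
  | zero =>
    cases k with
    | zero => simp [qfactL]
    | succ k => rw [prod_qnumL_sub_eq_zero k.succ_pos]; exact dvd_zero _
  | succ m ih =>
    cases k with
    | zero => simp [qfactL]
    | succ k =>
      rcases lt_or_ge m k with h | h
      · rw [prod_qnumL_sub_eq_zero (Nat.succ_lt_succ h)]; exact dvd_zero _
      have hsplit : ∏ i ∈ Finset.range (k + 1), qnumL (m + 1 - i)
          = T (m - k : ℕ) * ((∏ i ∈ Finset.range k, qnumL (m - i)) * qnumL (k + 1))
            + T (-(k + 1 : ℕ)) * ∏ i ∈ Finset.range (k + 1), qnumL (m - i) := by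
        rw [prod_range_succ_qnumL_succ_sub, qnumL_succ_eq_of_le h, Finset.prod_range_succ]
        ring
      rw [hsplit, qfactL_succ]
      exact dvd_add (dvd_mul_of_dvd_right (mul_dvd_mul (ih k) dvd_rfl) _)
        (dvd_mul_of_dvd_right (qfactL_succ k ▸ ih (k + 1)) _)

theorem qbinom_is_polynomial_in_delta_general (m k : ℕ) :
    ∃ p : Polynomial ℤ,
      Polynomial.aeval (LaurentPolynomial.T 1 + LaurentPolynomial.T (-1)) p * qfactL k
        = ∏ i ∈ Finset.range k, qnumL (m - i) := by
  obtain ⟨u, hu⟩ := qfactL_dvd_prod_qnumL_sub m k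
  have hu_inv : invert u = u := by
    refine mul_left_cancel₀ (qfactL_ne_zero k) ?_
    calc qfactL k * invert u = invert (qfactL k * u) := by rw [map_mul, invert_qfactL]
      _ = qfactL k * u := by simp only [← hu, map_prod, invert_qnumL]
  obtain ⟨p, hp⟩ := exists_aeval_eq_of_invert_eq hu_inv
  exact ⟨p, by rw [hp, hu, mul_comm]⟩

/-- For `0 ≤ k ≤ m` there is a polynomial `p ∈ ℤ[X]` with
`p(q + q⁻¹) · [k]_q! = [m]_q · [m-1]_q ⋯ [m-k+1]_q` in `ℤ[q,q⁻¹]`;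
i.e. the balanced quantum binomial `(m choose k)_q` exists and is an integer polynomial
in `δ = q + q⁻¹`. -/
theorem qbinom_is_polynomial_in_delta (m k : ℕ) (hk : k ≤ m) :
    ∃ p : Polynomial ℤ,
      Polynomial.aeval (LaurentPolynomial.T 1 + LaurentPolynomial.T (-1)) p * qfactL k
        = ∏ i ∈ Finset.range k, qnumL (m - i) :=
  qbinom_is_polynomial_in_delta_general m k
end

section
/- Let w = (w_1,…,w_d) with each w_j ∈ {1,…,n−1}, and let N : V_{w_1} ⊗ ⋯ ⊗ V_{w_d} → V_{y_1} ⊗ ⋯ ⊗ V_{y_d} be any composition of maps each of which is of the form id ⊗ ⋯ ⊗ (neutral rung map on two adjacent tensor factors) ⊗ ⋯ ⊗ id, so that (y_1,…,y_d) is the corresponding permutation of (w_1,…,w_d). Then: (1) N(x_{[1,w_1]} ⊗ ⋯ ⊗ x_{[1,w_d]}) = ε q^z · x_{[1,y_1]} ⊗ ⋯ ⊗ x_{[1,y_d]} for some sign ε ∈ {±1} and z ∈ ℤ; and (2) for every basis element x_{S_1} ⊗ ⋯ ⊗ x_{S_d} of the source with (S_1,…,S_d) ≠ ([1,w_1],…,[1,w_d]),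 the coefficient of x_{[1,y_1]} ⊗ ⋯ ⊗ x_{[1,y_d]} in N(x_{S_1} ⊗ ⋯ ⊗ x_{S_d}) is zero. -/
noncomputable section

/-- The base ring `R = ℤ[q,q⁻¹]`. -/
abbrev R := LaurentPolynomial ℤ

/-- Index type for the basis of the "big" free module `⊕_p V_p`: all subsets of `{1,…,n}`. -/
abbrev F (n : ℕ) := Finset (Fin n)

/-- The free `R`-module `⊕_p V_p` with basis `x_S` for `S ⊆ {1,…,n}`; the submodule spanned
by the `x_S` with `|S| = p` is `V_p`. -/
abbrev Big (n : ℕ) := F n →₀ R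

/-- The model of `(⊕ V_p) ⊗ (⊕ V_r)`, free on pairs of subsets. -/
abbrev Big2 (n : ℕ) := (F n × F n) →₀ R

/-- The model of a `d`-fold tensor product, free on `d`-tuples of subsets. -/
abbrev BigD (n d : ℕ) := (Fin d → F n) →₀ R

/-- `ℓ(S,T) = #{(i,j) ∈ S × T : i < j}`. -/
def ell {n : ℕ} (S T : F n) : ℕ := ((S ×ˢ T).filter (fun p => p.1 < p.2)).card

/-- `(−q)^z` for `z : ℤ`. -/
def negqpow (z : ℤ) : R := (-1 : R) ^ z.natAbs * LaurentPolynomial.T z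

/-- The merge map `M` : `x_S ⊗ x_T ↦ (−q)^{ℓ(S,T)} x_{S ∪ T}` if `S ∩ T = ∅`, else `0`.
On the graded piece `V_a ⊗ V_b` this is `M_{a,b}`. -/
def mergeMap (n : ℕ) : Big2 n →ₗ[R] Big n :=
  Finsupp.lift (Big n) R (F n × F n)
    (fun p => if Disjoint p.1 p.2
      then Finsupp.single (p.1 ∪ p.2) (negqpow (ell p.1 p.2)) else 0)

/-- The split map taking the second tensor factor of size `c`:
`x_S ↦ (−1)^{(|S|−c)·c} Σ_{T ⊆ S, |T| = |S|−c} (−q)^{−ℓ(S∖T,T)} x_T ⊗ x_{S∖T}`.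
On the graded piece `V_{a+c}` this is `M'_{a,c}`. -/
def splitR (n c : ℕ) : Big n →ₗ[R] Big2 n :=
  Finsupp.lift (Big2 n) R (F n)
    (fun S => ((-1 : R) ^ ((S.card - c) * c)) •
      ∑ T ∈ S.powersetCard (S.card - c),
        Finsupp.single (T, S \ T) (negqpow (-(ell (S \ T) T : ℤ))))

/-- The split map taking the first tensor factor of size `c`:
`x_S ↦ (−1)^{c·(|S|−c)} Σ_{T ⊆ S, |T| = c} (−q)^{−ℓ(S∖T,T)} x_T ⊗ x_{S∖T}`.
On the graded piece `V_{c+b}` this is `M'_{c,b}`. -/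
def splitL (n c : ℕ) : Big n →ₗ[R] Big2 n :=
  Finsupp.lift (Big2 n) R (F n)
    (fun S => ((-1 : R) ^ (c * (S.card - c))) •
      ∑ T ∈ S.powersetCard c,
        Finsupp.single (T, S \ T) (negqpow (-(ell (S \ T) T : ℤ))))

/-- `f ⊗ id` in the free-module model. -/
def tensorId {α α' β : Type} (f : (α →₀ R) →ₗ[R] (α' →₀ R)) :
    ((α × β) →₀ R) →ₗ[R] ((α' × β) →₀ R) :=
  Finsupp.lift _ R _
    (fun p => Finsupp.mapDomain (fun a => (a, p.2)) (f (Finsupp.single p.1 1)))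

/-- `id ⊗ f` in the free-module model. -/
def idTensor {α β β' : Type} (f : (β →₀ R) →ₗ[R] (β' →₀ R)) :
    ((α × β) →₀ R) →ₗ[R] ((α × β') →₀ R) :=
  Finsupp.lift _ R _
    (fun p => Finsupp.mapDomain (fun b => (p.1, b)) (f (Finsupp.single p.2 1)))

/-- The canonical associator of the free-module model. -/
def assocMap (α β γ : Type) : (((α × β) × γ) →₀ R) ≃ₗ[R] ((α × (β × γ)) →₀ R) :=
  Finsupp.domLCongr (Equiv.prodAssoc α β γ)

/-- The northeast rung map `R^{NE}_c = (id ⊗ M_{c,r}) ∘ (M'_{p−c,c} ⊗ id) :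
V_p ⊗ V_r → V_{p−c} ⊗ V_{r+c}` (assembled over all graded pieces). -/
def rungNE (n c : ℕ) : Big2 n →ₗ[R] Big2 n :=
  (idTensor (mergeMap n)) ∘ₗ (assocMap (F n) (F n) (F n)).toLinearMap
    ∘ₗ (tensorId (splitR n c))

/-- The northwest rung map `R^{NW}_c = (M_{p,c} ⊗ id) ∘ (id ⊗ M'_{c,r−c}) :
V_p ⊗ V_r → V_{p+c} ⊗ V_{r−c}` (assembled over all graded pieces). -/
def rungNW (n c : ℕ) : Big2 n →ₗ[R] Big2 n :=
  (tensorId (mergeMap n)) ∘ₗ (assocMap (F n) (F n) (F n)).symm.toLinearMap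
    ∘ₗ (idTensor (splitL n c))

/-- Apply a two-factor map `g` at the adjacent tensor positions `i, i+1` of a `d`-fold
tensor product: `id^{⊗i} ⊗ g ⊗ id^{⊗(d−i−2)}` (the identity if `i+1 ≥ d`). -/
def atPos (n d i : ℕ) (g : Big2 n →ₗ[R] Big2 n) : BigD n d →ₗ[R] BigD n d :=
  if h : i + 1 < d then
    Finsupp.lift (BigD n d) R (Fin d → F n)
      (fun f => Finsupp.mapDomain
        (fun p => Function.update (Function.update f ⟨i, Nat.lt_of_succ_lt h⟩ p.1) ⟨i + 1, h⟩ p.2)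
        (g (Finsupp.single (f ⟨i, Nat.lt_of_succ_lt h⟩, f ⟨i + 1, h⟩) 1)))
  else LinearMap.id

/-- The subset of `Fin n` corresponding (0-based) to the 1-based interval
`(a, b] ⊆ {1,…,n}` (so `[1,m]` is `ico n 0 m`). -/
def ico (n a b : ℕ) : F n :=
  Finset.univ.filter (fun j => a ≤ (j : ℕ) ∧ (j : ℕ) < b)

end

noncomputable section

/-- The neutral rung map on two adjacent tensor factors: on `V_p ⊗ V_r` it is
`R^{NE}_{p−r}` if `p > r`, `R^{NW}_{r−p}` if `p < r`, and the identity if `p = r`. -/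
def neutralRung (n : ℕ) : Big2 n →ₗ[R] Big2 n :=
  Finsupp.lift (Big2 n) R (F n × F n)
    (fun p =>
      if p.1.card = p.2.card then Finsupp.single p 1
      else if p.2.card < p.1.card then
        rungNE n (p.1.card - p.2.card) (Finsupp.single p 1)
      else
        rungNW n (p.2.card - p.1.card) (Finsupp.single p 1))

/-- The transposition `(i, i+1)` of `Fin d` (the identity if `i+1 ≥ d`). -/
def swapPerm (d i : ℕ) : Equiv.Perm (Fin d) :=
  if h : i + 1 < d then Equiv.swap ⟨i, Nat.lt_of_succ_lt h⟩ ⟨i + 1, h⟩ else 1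

end

/-!
Weigh a basis vector `x_{S₁} ⊗ ⋯ ⊗ x_{S_d}` by the sum of all elements of all `S_k`. A neutral
rung on `V_p ⊗ V_r` only moves elements between the two factors and lands in `V_r ⊗ V_p`, so it
preserves this weight; and among sets of a given size the initial segment `[1,a]` is the unique
one of least weight. Hence the rung takes `x_{[1,a]} ⊗ x_{[1,b]}` to a single term
`±q^z x_{[1,b]} ⊗ x_{[1,a]}`, and no other basis vector of `V_a ⊗ V_b` has `x_{[1,b]} ⊗ x_{[1,a]}`
in its image. This "sole source" property survives tensoring with identities and composition,
which carries it along the whole ladder.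
-/

open Finsupp LaurentPolynomial

def signedMonomials : Submonoid R where
  carrier := {u | ∃ ε z : ℤ, (ε = 1 ∨ ε = -1) ∧ u = C ε * T z}
  one_mem' := ⟨1, 0, Or.inl rfl, by simp⟩
  mul_mem' := by
    rintro _ _ ⟨ε₁, z₁, hε₁, rfl⟩ ⟨ε₂, z₂, hε₂, rfl⟩
    refine ⟨ε₁ * ε₂, z₁ + z₂, ?_, by rw [T_add, map_mul]; ring⟩
    rcases hε₁ with rfl | rfl <;> rcases hε₂ with rfl | rfl <;> simp

lemma neg_one_mem_signedMonomials : (-1 : R) ∈ signedMonomials := ⟨-1, 0, Or.inr rfl, by simp⟩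

lemma negqpow_mem_signedMonomials (z : ℤ) : negqpow z ∈ signedMonomials :=
  mul_mem (pow_mem neg_one_mem_signedMonomials _) ⟨1, z, Or.inl rfl, by simp⟩

structure HasSoleSource {K α β : Type*} [Semiring K] (M : Submonoid K)
    (L : (α →₀ K) →ₗ[K] (β →₀ K)) (x : α) (y : β) : Prop where
  apply_single : ∃ u ∈ M, L (single x 1) = single y u
  apply_single_apply_of_ne : ∀ x' ≠ x, L (single x' 1) y = 0

namespace HasSoleSource

variable {K α β γ : Type*} [CommSemiring K] {M : Submonoid K}

lemma id (x : α) : HasSoleSource M LinearMap.id x x :=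
  ⟨⟨1, one_mem M, rfl⟩, fun _ hx' => single_eq_of_ne hx'.symm⟩

lemma apply_eq_zero {L : (α →₀ K) →ₗ[K] (β →₀ K)} {x : α} {y : β} (hL : HasSoleSource M L x y)
    {v : α →₀ K} (hv : v x = 0) : L v y = 0 := by
  rw [← v.sum_single, map_finsuppSum, Finsupp.sum_apply]
  refine Finset.sum_eq_zero fun x' _ => ?_
  dsimp only
  rw [← smul_single_one, map_smul, Finsupp.smul_apply]
  by_cases hx' : x' = x
  · rw [hx', hv, zero_smul]
  · rw [hL.apply_single_apply_of_ne x' hx', smul_zero]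

lemma comp {L₁ : (α →₀ K) →ₗ[K] (β →₀ K)} {L₂ : (β →₀ K) →ₗ[K] (γ →₀ K)} {x : α} {y : β} {z : γ}
    (h₂ : HasSoleSource M L₂ y z) (h₁ : HasSoleSource M L₁ x y) :
    HasSoleSource M (L₂ ∘ₗ L₁) x z := by
  obtain ⟨u₁, hu₁, he₁⟩ := h₁.apply_single
  obtain ⟨u₂, hu₂, he₂⟩ := h₂.apply_single
  refine ⟨⟨u₁ * u₂, mul_mem hu₁ hu₂, ?_⟩,
    fun x' hx' => h₂.apply_eq_zero (h₁.apply_single_apply_of_ne x' hx')⟩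
  rw [LinearMap.comp_apply, he₁, ← smul_single_one, map_smul, he₂, smul_single, smul_eq_mul]

end HasSoleSource

lemma smul_sum_ite_single_apply {K ι α : Type*} [Semiring K] [DecidableEq α] (c : K)
    (s : Finset ι) (p : ι → Prop) [DecidablePred p] (g : ι → α) (k : ι → K) (x : α) :
    (c • ∑ i ∈ s, if p i then single (g i) (k i) else 0) x
      = c * ∑ i ∈ s with p i ∧ g i = x, k i := by
  rw [Finsupp.smul_apply, finsetSum_apply, Finset.sum_filter, smul_eq_mul]
  congr 1
  refine Finset.sum_congr rfl fun i _ => ?_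
  split_ifs <;> simp_all

section updatePair

variable {β : Type*} {d i : ℕ} (h : i + 1 < d)

def updatePair (f : Fin d → β) (p : β × β) : Fin d → β :=
  Function.update (Function.update f ⟨i, Nat.lt_of_succ_lt h⟩ p.1) ⟨i + 1, h⟩ p.2

lemma updatePair_apply_fst (f : Fin d → β) (p : β × β) :
    updatePair h f p ⟨i, Nat.lt_of_succ_lt h⟩ = p.1 := by
  simp [updatePair, Fin.ext_iff]

lemma updatePair_apply_snd (f : Fin d → β) (p : β × β) : updatePair h f p ⟨i + 1, h⟩ = p.2 := by
  simp [updatePair]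

lemma updatePair_apply_of_ne (f : Fin d → β) (p : β × β) {j : Fin d}
    (hj₁ : j ≠ ⟨i, Nat.lt_of_succ_lt h⟩) (hj₂ : j ≠ ⟨i + 1, h⟩) : updatePair h f p j = f j := by
  simp [updatePair, hj₁, hj₂]

lemma eq_of_updatePair_eq {f g : Fin d → β} {p q : β × β}
    (hpq : updatePair h f p = updatePair h g q) : p = q :=
  Prod.ext
    (by simpa only [updatePair_apply_fst] using congrFun hpq ⟨i, Nat.lt_of_succ_lt h⟩)
    (by simpa only [updatePair_apply_snd] using congrFun hpq ⟨i + 1, h⟩)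

lemma updatePair_injective (f : Fin d → β) : Function.Injective (updatePair h f) :=
  fun _ _ => eq_of_updatePair_eq h

lemma updatePair_self (f : Fin d → β) :
    updatePair h f (f ⟨i, Nat.lt_of_succ_lt h⟩, f ⟨i + 1, h⟩) = f := by
  simp [updatePair]

lemma updatePair_updatePair (f : Fin d → β) (p q : β × β) :
    updatePair h (updatePair h f p) q = updatePair h f q := by
  funext j
  by_cases hj₁ : j = ⟨i, Nat.lt_of_succ_lt h⟩
  · simp only [hj₁, updatePair_apply_fst]
  by_cases hj₂ : j = ⟨i + 1, h⟩
  · simp only [hj₂, updatePair_apply_snd]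
  simp only [updatePair_apply_of_ne h _ _ hj₁ hj₂]

end updatePair

variable {n d : ℕ}

lemma mergeMap_single (S T : F n) (r : R) :
    mergeMap n (single (S, T) r)
      = if Disjoint S T then single (S ∪ T) (r * negqpow (ell S T)) else 0 := by
  rw [← smul_single_one, map_smul]
  split_ifs <;> simp_all [mergeMap, -single_mul]

lemma tensorId_single {α α' β : Type} (f : (α →₀ R) →ₗ[R] (α' →₀ R)) (a : α) (b : β) (r : R) :
    tensorId f (single (a, b) r) = mapDomain (·, b) (f (single a r)) := by
  rw [← smul_single_one, map_smul, ← smul_single_one a r, map_smul, mapDomain_smul]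
  simp [tensorId]

lemma idTensor_single {α β β' : Type} (f : (β →₀ R) →ₗ[R] (β' →₀ R)) (a : α) (b : β) (r : R) :
    idTensor f (single (a, b) r) = mapDomain (a, ·) (f (single b r)) := by
  rw [← smul_single_one, map_smul, ← smul_single_one b r, map_smul, mapDomain_smul]
  simp [idTensor]

lemma rungNE_single (c : ℕ) (S T : F n) :
    rungNE n c (single (S, T) 1)
      = ((-1 : R) ^ ((S.card - c) * c)) •
        ∑ A ∈ S.powersetCard (S.card - c),
          if Disjoint (S \ A) T then
            single (A, (S \ A) ∪ T) (negqpow (-(ell (S \ A) A : ℤ)) * negqpow (ell (S \ A) T))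
          else 0 := by
  simp only [rungNE, LinearMap.comp_apply, tensorId_single, splitR, lift_apply, zero_smul,
    sum_single_index, one_smul, mapDomain_smul, mapDomain_finsetSum, mapDomain_single, map_smul,
    map_sum, LinearEquiv.coe_coe, assocMap, domLCongr_single, Equiv.prodAssoc_apply,
    idTensor_single, mergeMap_single]
  congr 1
  refine Finset.sum_congr rfl fun A _ => ?_
  split_ifs <;> simp [mapDomain_single, -single_mul]

lemma rungNW_single (c : ℕ) (S T : F n) :
    rungNW n c (single (S, T) 1)
      = ((-1 : R) ^ (c * (T.card - c))) •
        ∑ B ∈ T.powersetCard c,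
          if Disjoint S B then
            single (S ∪ B, T \ B) (negqpow (-(ell (T \ B) B : ℤ)) * negqpow (ell S B))
          else 0 := by
  simp only [rungNW, LinearMap.comp_apply, idTensor_single, splitL, lift_apply, zero_smul,
    sum_single_index, one_smul, mapDomain_smul, mapDomain_finsetSum, mapDomain_single, map_smul,
    map_sum, LinearEquiv.coe_coe, assocMap, domLCongr_symm, domLCongr_single,
    Equiv.prodAssoc_symm_apply, tensorId_single, mergeMap_single]
  congr 1
  refine Finset.sum_congr rfl fun B _ => ?_
  split_ifs <;> simp [mapDomain_single, mul_comm, -single_mul]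

lemma atPos_single {i : ℕ} (h : i + 1 < d) (G : Big2 n →ₗ[R] Big2 n) (f : Fin d → F n) :
    atPos n d i G (single f 1)
      = mapDomain (updatePair h f) (G (single (f ⟨i, Nat.lt_of_succ_lt h⟩, f ⟨i + 1, h⟩) 1)) := by
  rw [atPos, dif_pos h, lift_apply, sum_single_index (by rw [zero_smul]), one_smul]
  rfl

lemma HasSoleSource.atPos {M : Submonoid R} {i : ℕ} (h : i + 1 < d) {G : Big2 n →ₗ[R] Big2 n}
    {f : Fin d → F n} {p : F n × F n}
    (hG : HasSoleSource M G (f ⟨i, Nat.lt_of_succ_lt h⟩, f ⟨i + 1, h⟩) p) :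
    HasSoleSource M (atPos n d i G) f (updatePair h f p) := by
  obtain ⟨u, hu, he⟩ := hG.apply_single
  refine ⟨⟨u, hu, by rw [atPos_single h, he, mapDomain_single]⟩, fun g hg => ?_⟩
  rw [atPos_single h]
  by_cases hrange : ∃ q, updatePair h g q = updatePair h f p
  · obtain ⟨q, hq⟩ := hrange
    obtain rfl := eq_of_updatePair_eq h hq
    rw [← hq, mapDomain_apply (updatePair_injective h g)]
    refine hG.apply_single_apply_of_ne _ fun hgf => hg ?_
    calc g = updatePair h (updatePair h g q) (g ⟨i, Nat.lt_of_succ_lt h⟩, g ⟨i + 1, h⟩) := by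
          rw [updatePair_updatePair, updatePair_self]
      _ = f := by rw [hq, updatePair_updatePair, hgf, updatePair_self]
  · exact mapDomain_of_notMem_range _ _ fun ⟨q, hq⟩ => hrange ⟨q, hq⟩

lemma mem_ico_zero {a : ℕ} {j : Fin n} : j ∈ ico n 0 a ↔ (j : ℕ) < a := by
  simp [ico]

lemma ico_zero_mono {a b : ℕ} (hab : a ≤ b) : ico n 0 a ⊆ ico n 0 b :=
  fun _ hj => mem_ico_zero.mpr (lt_of_lt_of_le (mem_ico_zero.mp hj) hab)

lemma ico_zero_nested (a b : ℕ) : ico n 0 a ⊆ ico n 0 b ∨ ico n 0 b ⊆ ico n 0 a :=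
  (le_total a b).imp ico_zero_mono ico_zero_mono

def indexSum (S : F n) : ℕ := ∑ j ∈ S, (j : ℕ)

/-- The elements of `S` outside `[1,a]` exceed those of `[1,a]` outside `S` by at least one each. -/
lemma indexSum_ico_zero_add_card_sdiff_le {S : F n} {a : ℕ} (hS : S.card = (ico n 0 a).card) :
    indexSum (ico n 0 a) + (S \ ico n 0 a).card ≤ indexSum S := by
  set I := ico n 0 a
  have hlow : ∑ j ∈ I \ S, ((j : ℕ) + 1) ≤ (S \ I).card * a := by
    rw [← Finset.card_sdiff_comm hS.symm, ← smul_eq_mul]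
    exact Finset.sum_le_card_nsmul _ _ _ fun j hj => mem_ico_zero.mp (Finset.mem_sdiff.mp hj).1
  have hhigh : (S \ I).card * a ≤ ∑ j ∈ S \ I, (j : ℕ) := by
    rw [← smul_eq_mul]
    exact Finset.card_nsmul_le_sum _ _ _ fun j hj =>
      not_lt.mp fun hja => (Finset.mem_sdiff.mp hj).2 (mem_ico_zero.mpr hja)
  rw [Finset.sum_add_distrib, Finset.sum_const, smul_eq_mul, mul_one,
    Finset.card_sdiff_comm hS.symm] at hlow
  rw [indexSum, indexSum, ← Finset.sum_inter_add_sum_sdiff I S,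
    ← Finset.sum_inter_add_sum_sdiff S I, Finset.inter_comm]
  omega

lemma eq_ico_zero_of_indexSum_le {S T : F n} {a b : ℕ} (hS : S.card = (ico n 0 a).card)
    (hT : T.card = (ico n 0 b).card)
    (hw : indexSum S + indexSum T ≤ indexSum (ico n 0 a) + indexSum (ico n 0 b)) :
    S = ico n 0 a ∧ T = ico n 0 b := by
  have hS' := indexSum_ico_zero_add_card_sdiff_le hS
  have hT' := indexSum_ico_zero_add_card_sdiff_le hT
  have hsub : ∀ {U : F n} {c : ℕ}, U.card = (ico n 0 c).card → (U \ ico n 0 c).card = 0 →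
      U = ico n 0 c := fun hU h0 =>
    Finset.eq_of_subset_of_card_le (Finset.sdiff_eq_empty_iff_subset.mp (Finset.card_eq_zero.mp h0))
      hU.ge
  exact ⟨hsub hS (by omega), hsub hT (by omega)⟩

lemma neutralRung_single (S T : F n) :
    neutralRung n (single (S, T) 1)
      = if S.card = T.card then single (S, T) 1
        else if T.card < S.card then rungNE n (S.card - T.card) (single (S, T) 1)
        else rungNW n (T.card - S.card) (single (S, T) 1) := by
  simp [neutralRung]

section Conservation

variable {S T P Q : F n}

lemma rungNE_single_apply_ne_zero (hTS : T.card < S.card)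
    (h : rungNE n (S.card - T.card) (single (S, T) 1) (P, Q) ≠ 0) :
    P.card = T.card ∧ Q.card = S.card ∧ indexSum P + indexSum Q = indexSum S + indexSum T := by
  rw [rungNE_single, smul_sum_ite_single_apply] at h
  obtain ⟨A, hA, -⟩ := Finset.exists_ne_zero_of_sum_ne_zero (right_ne_zero_of_mul h)
  obtain ⟨hA, hdisj, hAPQ⟩ := Finset.mem_filter.mp hA
  obtain ⟨hAS, hAcard⟩ := Finset.mem_powersetCard.mp hA
  obtain ⟨rfl, rfl⟩ := Prod.mk.inj hAPQ
  have hunion := Finset.card_union_of_disjoint hdisj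
  have hsdiff := Finset.card_sdiff_of_subset hAS
  refine ⟨by omega, by omega, ?_⟩
  unfold indexSum
  rw [Finset.sum_union hdisj, ← Finset.sum_sdiff hAS]
  ring

lemma rungNW_single_apply_ne_zero (hST : S.card < T.card)
    (h : rungNW n (T.card - S.card) (single (S, T) 1) (P, Q) ≠ 0) :
    P.card = T.card ∧ Q.card = S.card ∧ indexSum P + indexSum Q = indexSum S + indexSum T := by
  rw [rungNW_single, smul_sum_ite_single_apply] at h
  obtain ⟨B, hB, -⟩ := Finset.exists_ne_zero_of_sum_ne_zero (right_ne_zero_of_mul h)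
  obtain ⟨hB, hdisj, hBPQ⟩ := Finset.mem_filter.mp hB
  obtain ⟨hBT, hBcard⟩ := Finset.mem_powersetCard.mp hB
  obtain ⟨rfl, rfl⟩ := Prod.mk.inj hBPQ
  have hunion := Finset.card_union_of_disjoint hdisj
  have hsdiff := Finset.card_sdiff_of_subset hBT
  refine ⟨by omega, by omega, ?_⟩
  unfold indexSum
  rw [Finset.sum_union hdisj, ← Finset.sum_sdiff hBT]
  ring

lemma neutralRung_single_apply_ne_zero (h : neutralRung n (single (S, T) 1) (P, Q) ≠ 0) :
    P.card = T.card ∧ Q.card = S.card ∧ indexSum P + indexSum Q = indexSum S + indexSum T := by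
  rw [neutralRung_single] at h
  split_ifs at h with hST hTS
  · obtain ⟨rfl, rfl⟩ : S = P ∧ T = Q := by simpa [single_apply] using h
    exact ⟨hST, hST.symm, rfl⟩
  · exact rungNE_single_apply_ne_zero hTS h
  · exact rungNW_single_apply_ne_zero (by omega) h

end Conservation

lemma neutralRung_single_apply_mem_of_nested {I J : F n} (hIJ : I ⊆ J ∨ J ⊆ I) :
    neutralRung n (single (I, J) 1) (J, I) ∈ signedMonomials := by
  have hsign : ∀ (m : ℕ) (z₁ z₂ : ℤ), (-1 : R) ^ m * (negqpow z₁ * negqpow z₂) ∈ signedMonomials :=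
    fun m z₁ z₂ => mul_mem (pow_mem neg_one_mem_signedMonomials m)
      (mul_mem (negqpow_mem_signedMonomials z₁) (negqpow_mem_signedMonomials z₂))
  rw [neutralRung_single]
  split_ifs with hcard hlt
  · obtain rfl : I = J := by
      rcases hIJ with hIJ | hJI
      · exact Finset.eq_of_subset_of_card_le hIJ hcard.ge
      · exact (Finset.eq_of_subset_of_card_le hJI hcard.le).symm
    rw [single_eq_same]
    exact one_mem _
  · have hJI : J ⊆ I := hIJ.resolve_left fun h => (Finset.card_le_card h).not_gt hlt
    rw [rungNE_single, smul_sum_ite_single_apply, Finset.sum_eq_single_of_mem J]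
    · exact hsign _ _ _
    · rw [Finset.mem_filter, Finset.mem_powersetCard, Finset.sdiff_union_of_subset hJI]
      exact ⟨⟨hJI, by omega⟩, Finset.sdiff_disjoint, rfl⟩
    · exact fun A hA hAJ => absurd (Prod.mk.inj (Finset.mem_filter.mp hA).2.2).1 hAJ
  · have hIJ : I ⊆ J := hIJ.resolve_right fun h => by
      have := Finset.card_le_card h
      omega
    rw [rungNW_single, smul_sum_ite_single_apply, Finset.sum_eq_single_of_mem (J \ I)]
    · exact hsign _ _ _
    · rw [Finset.mem_filter, Finset.mem_powersetCard, Finset.union_sdiff_of_subset hIJ,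
        Finset.sdiff_sdiff_eq_self hIJ, Finset.card_sdiff_of_subset hIJ]
      exact ⟨⟨Finset.sdiff_subset, rfl⟩, Finset.disjoint_sdiff, rfl⟩
    · intro B hB hBJI
      obtain ⟨-, hdisj, hBPQ⟩ := Finset.mem_filter.mp hB
      exact absurd (by rw [← (Prod.mk.inj hBPQ).1, Finset.union_sdiff_cancel_left hdisj]) hBJI

lemma hasSoleSource_neutralRung (a b : ℕ) :
    HasSoleSource signedMonomials (neutralRung n)
      (ico n 0 a, ico n 0 b) (ico n 0 b, ico n 0 a) := by
  have hsupp : (neutralRung n (single (ico n 0 a, ico n 0 b) 1)).support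
      ⊆ {(ico n 0 b, ico n 0 a)} := by
    rintro ⟨P, Q⟩ hPQ
    obtain ⟨hP, hQ, hsum⟩ := neutralRung_single_apply_ne_zero (mem_support_iff.mp hPQ)
    obtain ⟨rfl, rfl⟩ := eq_ico_zero_of_indexSum_le hP hQ (by omega)
    exact Finset.mem_singleton_self _
  refine ⟨⟨_, neutralRung_single_apply_mem_of_nested (ico_zero_nested a b),
    eq_single_iff.mpr ⟨hsupp, rfl⟩⟩, ?_⟩
  rintro ⟨S, T⟩ hST
  by_contra hne
  obtain ⟨hT, hS, hsum⟩ := neutralRung_single_apply_ne_zero hne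
  obtain ⟨rfl, rfl⟩ := eq_ico_zero_of_indexSum_le hS.symm hT.symm (by omega)
  exact hST rfl

lemma hasSoleSource_atPos_neutralRung (w : Fin d → ℕ) (i : ℕ) :
    HasSoleSource signedMonomials (atPos n d i (neutralRung n)) (fun j => ico n 0 (w j))
      (fun j => ico n 0 (w (swapPerm d i j))) := by
  by_cases h : i + 1 < d
  · set I : Fin d := ⟨i, Nat.lt_of_succ_lt h⟩
    set I' : Fin d := ⟨i + 1, h⟩
    have hswap : (fun j => ico n 0 (w (swapPerm d i j)))
        = updatePair h (fun j => ico n 0 (w j)) (ico n 0 (w I'), ico n 0 (w I)) := by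
      funext j
      rw [swapPerm, dif_pos h]
      by_cases hj : j = I
      · rw [hj, Equiv.swap_apply_left, updatePair_apply_fst]
      by_cases hj' : j = I'
      · rw [hj', Equiv.swap_apply_right, updatePair_apply_snd]
      rw [Equiv.swap_apply_of_ne_of_ne hj hj', updatePair_apply_of_ne h _ _ hj hj']
    rw [hswap]
    exact (hasSoleSource_neutralRung _ _).atPos h
  · simpa [atPos, swapPerm, h] using HasSoleSource.id _

lemma hasSoleSource_foldl_atPos_neutralRung (w : Fin d → ℕ) (ps : List ℕ) :
    HasSoleSource signedMonomials
      (ps.foldl (fun acc i => atPos n d i (neutralRung n) ∘ₗ acc) LinearMap.id)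
      (fun j => ico n 0 (w j)) (fun j => ico n 0 (w ((ps.map (swapPerm d)).prod j))) := by
  induction ps using List.reverseRecOn with
  | nil => exact HasSoleSource.id _
  | append_singleton ps i ih =>
    simp only [List.foldl_append, List.foldl_cons, List.foldl_nil, List.map_append,
      List.map_singleton, List.prod_append, List.prod_singleton, Equiv.Perm.coe_mul,
      Function.comp_apply]
    exact (hasSoleSource_atPos_neutralRung (fun j => w ((ps.map (swapPerm d)).prod j)) i).comp ih

theorem neutral_ladder_on_top_basis_general (n d : ℕ) (w : Fin d → ℕ) (ps : List ℕ)
    (N : BigD n d →ₗ[R] BigD n d)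
    (hN : N = ps.foldl (fun acc i => atPos n d i (neutralRung n) ∘ₗ acc) LinearMap.id)
    (yv : Fin d → ℕ)
    (hy : yv = fun j => w (((ps.map (swapPerm d)).prod) j)) :
    (∃ ε z : ℤ, (ε = 1 ∨ ε = -1) ∧
        N (Finsupp.single (fun j => ico n 0 (w j)) 1)
          = Finsupp.single (fun j => ico n 0 (yv j))
              (LaurentPolynomial.C ε * LaurentPolynomial.T z)) ∧
    (∀ f : Fin d → Finset (Fin n), (∀ j, (f j).card = w j) →
        f ≠ (fun j => ico n 0 (w j)) →
        (N (Finsupp.single f 1)) (fun j => ico n 0 (yv j)) = 0) := by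
  subst hN hy
  obtain ⟨⟨_, ⟨ε, z, hε, rfl⟩, himage⟩, hcoeff⟩ := hasSoleSource_foldl_atPos_neutralRung w ps
  exact ⟨⟨ε, z, hε, himage⟩, fun f _ hf => hcoeff f hf⟩

/-- Let `N` be any composition of maps `id ⊗ ⋯ ⊗ (neutral rung) ⊗ ⋯ ⊗ id`, applied at the
list of positions `ps`, and let `y = w ∘ σ` be the corresponding permutation of the labels
`w` (with `1 ≤ w_j ≤ n−1`). Then:
(1) `N(x_{[1,w₁]} ⊗ ⋯ ⊗ x_{[1,w_d]}) = ε q^z · x_{[1,y₁]} ⊗ ⋯ ⊗ x_{[1,y_d]}` for a sign `ε`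
and `z ∈ ℤ`; and
(2) for every basis element `x_{S₁} ⊗ ⋯ ⊗ x_{S_d}` of the source (`|S_j| = w_j`) other than
the top one, the coefficient of `x_{[1,y₁]} ⊗ ⋯ ⊗ x_{[1,y_d]}` in its image is zero. -/
theorem neutral_ladder_on_top_basis (n d : ℕ) (hn : 2 ≤ n)
    (w : Fin d → ℕ) (hw : ∀ j, 1 ≤ w j ∧ w j ≤ n - 1)
    (ps : List ℕ) (hps : ∀ i ∈ ps, i + 1 < d)
    (N : BigD n d →ₗ[R] BigD n d)
    (hN : N = ps.foldl (fun acc i => atPos n d i (neutralRung n) ∘ₗ acc) LinearMap.id)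
    (yv : Fin d → ℕ)
    (hy : yv = fun j => w (((ps.map (swapPerm d)).prod) j)) :
    (∃ ε z : ℤ, (ε = 1 ∨ ε = -1) ∧
        N (Finsupp.single (fun j => ico n 0 (w j)) 1)
          = Finsupp.single (fun j => ico n 0 (yv j))
              (LaurentPolynomial.C ε * LaurentPolynomial.T z)) ∧
    (∀ f : Fin d → Finset (Fin n), (∀ j, (f j).card = w j) →
        f ≠ (fun j => ico n 0 (w j)) →
        (N (Finsupp.single f 1)) (fun j => ico n 0 (yv j)) = 0) :=
  neutral_ladder_on_top_basis_general n d w ps N hN yv hy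
end

section
/- Let 0 ≤ y_1 < x_1 < y_2 ≤ n, set a = y_1 + y_2 − x_1, and consider L = R^{NE}_{x_1−y_1} : V_{x_1} ⊗ V_a → V_{y_1} ⊗ V_{y_2}. Fix a subset Z ⊆ [1,x_1] with |Z| = y_1. Then for every A ⊆ {1,…,n} with |A| = a, the coefficient of x_Z ⊗ x_{[1,y_2]} in L(x_{[1,x_1]} ⊗ x_A) is nonzero if and only if A = Z ∪ (x_1,y_2], and in that case the coefficient is ε q^z for some sign ε ∈ {±1} and z ∈ ℤ. -/
/-!
Expanding `R^{NE}_c (x_S ⊗ x_A)`, the coefficient of `x_Z ⊗ x_B` comes only from the split term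
whose first factor is `Z`, and it survives the merge iff `S ∖ Z` and `A` are disjoint with union
`B`, i.e. iff `A = B ∖ (S ∖ Z)`; for `S = [1,x₁]`, `B = [1,y₂]` and `Z ⊆ S` this is
`Z ∪ (x₁,y₂]`. The surviving coefficient is a sign times two powers of `−q`, hence `±q^z ≠ 0`.
-/

open Finsupp LaurentPolynomial

lemma Finsupp.lift_single_apply {S X M : Type*} [Semiring S] [AddCommMonoid M] [Module S M]
    (g : X → M) (x : X) (r : S) : Finsupp.lift M S X g (single x r) = r • g x := by
  simp [Finsupp.lift_apply]

def IsSignedMonomial (r : R) : Prop := ∃ ε z : ℤ, (ε = 1 ∨ ε = -1) ∧ r = C ε * T z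

lemma isSignedMonomial_neg_one_pow (m : ℕ) : IsSignedMonomial ((-1 : R) ^ m) :=
  ⟨(-1) ^ m, 0, neg_one_pow_eq_or ℤ m, by simp⟩

lemma isSignedMonomial_T (z : ℤ) : IsSignedMonomial (T z) := ⟨1, z, Or.inl rfl, by simp⟩

lemma IsSignedMonomial.mul {r s : R} (hr : IsSignedMonomial r) (hs : IsSignedMonomial s) :
    IsSignedMonomial (r * s) := by
  obtain ⟨ε, z, hε, rfl⟩ := hr
  obtain ⟨ε', z', hε', rfl⟩ := hs
  refine ⟨ε * ε', z + z', by rcases hε with rfl | rfl <;> rcases hε' with rfl | rfl <;> simp, ?_⟩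
  rw [T_add, map_mul]
  ring

lemma IsSignedMonomial.ne_zero {r : R} (hr : IsSignedMonomial r) : r ≠ 0 := by
  obtain ⟨ε, z, hε, rfl⟩ := hr
  rw [← single_eq_C_mul_T, Ne, AddMonoidAlgebra.single_eq_zero]
  omega

lemma isSignedMonomial_negqpow (z : ℤ) : IsSignedMonomial (negqpow z) :=
  (isSignedMonomial_neg_one_pow _).mul (isSignedMonomial_T z)

lemma mapDomain_mergeMap_single (n : ℕ) (P U V : F n) :
    mapDomain (fun W => (P, W)) (mergeMap n (single (U, V) 1))
      = if Disjoint U V then single (P, U ∪ V) (negqpow (ell U V)) else 0 := by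
  simp only [mergeMap, lift_single_apply, one_smul]
  split <;> simp

lemma rungNE_single_apply (n c : ℕ) (S A Z B : F n) :
    rungNE n c (single (S, A) 1) (Z, B)
      = ∑ U ∈ S.powersetCard (S.card - c),
          if U = Z ∧ Disjoint (S \ U) A ∧ (S \ U) ∪ A = B
          then (-1 : R) ^ ((S.card - c) * c) * negqpow (-(ell (S \ U) U : ℤ))
                * negqpow (ell (S \ U) A)
          else 0 := by
  simp only [rungNE, LinearMap.comp_apply, tensorId, splitR, lift_single_apply, one_smul,
    mapDomain_smul, mapDomain_finsetSum, mapDomain_single, map_smul, map_sum, assocMap,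
    LinearEquiv.coe_coe, domLCongr_apply, domCongr_apply, equivMapDomain_single,
    Equiv.prodAssoc_apply, idTensor, mapDomain_mergeMap_single, Finsupp.smul_apply,
    finsetSum_apply, smul_eq_mul, Finset.mul_sum]
  refine Finset.sum_congr rfl fun U _ => ?_
  by_cases hd : Disjoint (S \ U) A
  · by_cases hT : U = Z ∧ S \ U ∪ A = B
    · obtain ⟨rfl, rfl⟩ := hT
      simp [hd, mul_assoc]
    · simp_all [Prod.ext_iff]
  · simp [hd]

lemma rungNE_single_apply_of_mem {n c : ℕ} {S Z : F n} (hZ : Z ∈ S.powersetCard (S.card - c))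
    (A B : F n) :
    rungNE n c (single (S, A) 1) (Z, B)
      = if Disjoint (S \ Z) A ∧ (S \ Z) ∪ A = B
        then (-1 : R) ^ ((S.card - c) * c) * negqpow (-(ell (S \ Z) Z : ℤ))
              * negqpow (ell (S \ Z) A)
        else 0 := by
  rw [rungNE_single_apply, Finset.sum_eq_single_of_mem Z hZ fun U _ hT => if_neg (by simp [hT])]
  simp only [true_and]

lemma Finset.disjoint_and_union_eq_iff {α : Type*} [DecidableEq α] {X A B : Finset α}
    (hX : X ⊆ B) : Disjoint X A ∧ X ∪ A = B ↔ A = B \ X := by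
  constructor
  · rintro ⟨hd, rfl⟩
    exact (union_sdiff_cancel_left hd).symm
  · rintro rfl
    exact ⟨disjoint_sdiff, union_sdiff_of_subset hX⟩

lemma card_ico (n a b : ℕ) (hb : b ≤ n) : (ico n a b).card = b - a := by
  rw [← Nat.card_Ico a b]
  refine Finset.card_bij (fun j _ => (j : ℕ)) ?_ (fun j _ k _ h => Fin.val_injective h) ?_
  · intro j hj
    simp only [ico, Finset.mem_filter, Finset.mem_univ, true_and] at hj
    simpa [Finset.mem_Ico] using hj
  · intro k hk
    rw [Finset.mem_Ico] at hk
    exact ⟨⟨k, hk.2.trans_le hb⟩, by simp [ico, hk], rfl⟩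

lemma ico_subset_ico_right (n a : ℕ) {b c : ℕ} (h : b ≤ c) : ico n a b ⊆ ico n a c := by
  intro j
  simp only [ico, Finset.mem_filter, Finset.mem_univ, true_and]
  omega

lemma ico_sdiff_ico_left (n a : ℕ) {b c : ℕ} (h : a ≤ b) : ico n a c \ ico n a b = ico n b c := by
  ext j
  simp only [ico, Finset.mem_sdiff, Finset.mem_filter, Finset.mem_univ, true_and]
  omega

theorem rung_coefficient_of_shifted_basis_general (n y1 x1 y2 : ℕ)
    (h1 : y1 < x1) (h2 : x1 < y2) (h3 : y2 ≤ n)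
    (a : ℕ)
    (Z : Finset (Fin n)) (hZ : Z ⊆ ico n 0 x1) (hZcard : Z.card = y1) :
    ∀ A : Finset (Fin n), A.card = a →
      (((rungNE n (x1 - y1) (Finsupp.single (ico n 0 x1, A) 1)) (Z, ico n 0 y2) ≠ 0)
          ↔ A = Z ∪ ico n x1 y2) ∧
      (A = Z ∪ ico n x1 y2 →
        ∃ ε z : ℤ, (ε = 1 ∨ ε = -1) ∧
          (rungNE n (x1 - y1) (Finsupp.single (ico n 0 x1, A) 1)) (Z, ico n 0 y2)
            = LaurentPolynomial.C ε * LaurentPolynomial.T z) := by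
  intro A _
  have hZmem : Z ∈ (ico n 0 x1).powersetCard ((ico n 0 x1).card - (x1 - y1)) := by
    rw [Finset.mem_powersetCard, card_ico n 0 x1 (h2.le.trans h3)]
    exact ⟨hZ, by omega⟩
  have hsub : ico n 0 x1 \ Z ⊆ ico n 0 y2 :=
    Finset.sdiff_subset.trans (ico_subset_ico_right n 0 h2.le)
  have hcomplement : ico n 0 y2 \ (ico n 0 x1 \ Z) = Z ∪ ico n x1 y2 := by
    rw [sdiff_sdiff_right', ← Finset.sup_eq_union, ico_sdiff_ico_left n 0 (Nat.zero_le x1),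
      Finset.inf_eq_inter, Finset.inter_eq_right.mpr (hZ.trans (ico_subset_ico_right n 0 h2.le)),
      sup_comm]
  have hmono := ((isSignedMonomial_neg_one_pow (((ico n 0 x1).card - (x1 - y1)) * (x1 - y1))).mul
    (isSignedMonomial_negqpow (-(ell (ico n 0 x1 \ Z) Z : ℤ)))).mul
    (isSignedMonomial_negqpow (ell (ico n 0 x1 \ Z) A))
  simp only [rungNE_single_apply_of_mem hZmem, Finset.disjoint_and_union_eq_iff hsub, hcomplement]
  by_cases hA : A = Z ∪ ico n x1 y2
  · rw [if_pos hA]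
    exact ⟨iff_of_true hmono.ne_zero hA, fun _ => hmono⟩
  · simp [hA]

/-- For `L = R^{NE}_{x₁−y₁} : V_{x₁} ⊗ V_a → V_{y₁} ⊗ V_{y₂}` and a fixed `Z ⊆ [1,x₁]` with
`|Z| = y₁`: for every `A` of size `a`, the coefficient of `x_Z ⊗ x_{[1,y₂]}` in
`L(x_{[1,x₁]} ⊗ x_A)` is nonzero iff `A = Z ∪ (x₁,y₂]`, in which case it is `ε q^z` for a
sign `ε` and `z ∈ ℤ`. -/
theorem rung_coefficient_of_shifted_basis (n y1 x1 y2 : ℕ) (hn : 2 ≤ n)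
    (h1 : y1 < x1) (h2 : x1 < y2) (h3 : y2 ≤ n)
    (a : ℕ) (ha : a = y1 + y2 - x1)
    (Z : Finset (Fin n)) (hZ : Z ⊆ ico n 0 x1) (hZcard : Z.card = y1) :
    ∀ A : Finset (Fin n), A.card = a →
      (((rungNE n (x1 - y1) (Finsupp.single (ico n 0 x1, A) 1)) (Z, ico n 0 y2) ≠ 0)
          ↔ A = Z ∪ ico n x1 y2) ∧
      (A = Z ∪ ico n x1 y2 →
        ∃ ε z : ℤ, (ε = 1 ∨ ε = -1) ∧
          (rungNE n (x1 - y1) (Finsupp.single (ico n 0 x1, A) 1)) (Z, ico n 0 y2)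
            = LaurentPolynomial.C ε * LaurentPolynomial.T z) :=
  rung_coefficient_of_shifted_basis_general n y1 x1 y2 h1 h2 h3 a Z hZ hZcard
end
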